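/- (Mirsky-type local density computation) The density of primes p for which p−1 is squarefree, relative to all primes, is ∏_p (1 − 1/(p(p−1))), and this equals ∑_{a=1}^∞ μ(a)/φ(a^2): i.e., the series ∑_{a≥1} μ(a)/φ(a^2) converges absolutely and equals the Euler product ∏_p (1 − 1/(p(p−1))). -/

import Mathlib

open Filter ArithmeticFunction

private lemma odd_le_sq_totient : ∀ n : ℕ, Odd n → n ≤ Nat.totient n ^ 2 := by
  intro n
  induction n using Nat.strong_induction_on with
  | _ n ih =>
    intro hodd
    rcases eq_or_ne n 1 with rfl | hn1
    · simp
    have hn0 : n ≠ 0 := by rintro rfl; simp [Nat.odd_iff] at hodd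
    have h2 : ¬ (2 ∣ n) := Nat.two_dvd_ne_zero.mpr (Nat.odd_iff.mp hodd)
    set p := n.minFac with hp
    have hpp : p.Prime := Nat.minFac_prime hn1
    have hpdvd : p ∣ n := Nat.minFac_dvd n
    have hp3 : 3 ≤ p := by
      have h2le := hpp.two_le
      rcases Nat.lt_or_ge p 3 with h | h
      · interval_cases p
        · exact absurd hpdvd h2
      · exact h
    set k := n.factorization p with hk
    have hk0 : k ≠ 0 := (Nat.Prime.factorization_pos_of_dvd hpp hn0 hpdvd).ne'
    have hsplit : p ^ k * (n / p ^ k) = n := Nat.ordProj_mul_ordCompl_eq_self n p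
    have hcop : Nat.Coprime (p ^ k) (n / p ^ k) :=
      Nat.Coprime.pow_left _ (Nat.coprime_ordCompl hpp hn0)
    set b := n / p ^ k with hb
    have hbdvd : b ∣ n := Nat.ordCompl_dvd n p
    have hbodd : Odd b := by
      rw [Nat.odd_iff, ← Nat.two_dvd_ne_zero]
      exact fun h => h2 (h.trans hbdvd)
    have hb0 : b ≠ 0 := by
      rintro h; rw [h, mul_zero] at hsplit; exact hn0 hsplit.symm
    have hblt : b < n := by
      have h1 : 1 < p ^ k := Nat.one_lt_pow hk0 hpp.one_lt
      calc b = 1 * b := (one_mul b).symm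
        _ < p ^ k * b := (Nat.mul_lt_mul_right (Nat.pos_of_ne_zero hb0)).mpr h1
        _ = n := hsplit
    have hib := ih b hblt hbodd
    have hpk : p ^ k ≤ Nat.totient (p ^ k) ^ 2 := by
      rcases Nat.exists_eq_succ_of_ne_zero hk0 with ⟨m, hm⟩
      rw [hm, Nat.totient_prime_pow hpp (Nat.succ_pos m)]
      have h1 : p ≤ (p - 1) ^ 2 := by
        rcases Nat.exists_eq_add_of_le hp3 with ⟨q, hq⟩
        rw [hq]
        have h1' : 3 + q - 1 = q + 2 := by omega
        rw [h1']
        nlinarith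
      have h2' : p ^ m ≤ (p ^ m) ^ 2 := by
        rw [← pow_mul]
        exact Nat.pow_le_pow_right hpp.pos (by omega)
      calc p ^ (m + 1) = p ^ m * p := by ring
        _ ≤ (p ^ m) ^ 2 * (p - 1) ^ 2 := Nat.mul_le_mul h2' h1
        _ = (p ^ m * (p - 1)) ^ 2 := by ring
    calc n = p ^ k * b := hsplit.symm
      _ ≤ Nat.totient (p ^ k) ^ 2 * Nat.totient b ^ 2 := Nat.mul_le_mul hpk hib
      _ = (Nat.totient (p ^ k) * Nat.totient b) ^ 2 := by ring
      _ = Nat.totient n ^ 2 := by rw [← Nat.totient_mul hcop, hsplit]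

private lemma le_two_mul_sq_totient (n : ℕ) : n ≤ 2 * Nat.totient n ^ 2 := by
  rcases eq_or_ne n 0 with rfl | hn0
  · simp
  set k := n.factorization 2 with hk
  have hsplit : 2 ^ k * (n / 2 ^ k) = n := Nat.ordProj_mul_ordCompl_eq_self n 2
  have hcop : Nat.Coprime (2 ^ k) (n / 2 ^ k) :=
    Nat.Coprime.pow_left _ (Nat.coprime_ordCompl Nat.prime_two hn0)
  set b := n / 2 ^ k with hb
  have hbodd : Odd b := by
    rw [Nat.odd_iff, ← Nat.two_dvd_ne_zero]
    exact Nat.not_dvd_ordCompl Nat.prime_two hn0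
  have hib := odd_le_sq_totient b hbodd
  have h2k : 2 ^ k ≤ 2 * Nat.totient (2 ^ k) ^ 2 := by
    rcases Nat.eq_zero_or_pos k with hk0 | hkpos
    · rw [hk0]; simp
    rw [Nat.totient_prime_pow Nat.prime_two hkpos]
    have h : 2 ^ k ≤ 2 * (2 ^ (k - 1)) ^ 2 := by
      rw [← pow_mul, ← pow_succ']
      exact Nat.pow_le_pow_right (by norm_num) (by omega)
    simpa using h
  calc n = 2 ^ k * b := hsplit.symm
    _ ≤ (2 * Nat.totient (2 ^ k) ^ 2) * Nat.totient b ^ 2 := Nat.mul_le_mul h2k hib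
    _ = 2 * (Nat.totient (2 ^ k) * Nat.totient b) ^ 2 := by ring
    _ = 2 * Nat.totient n ^ 2 := by rw [← Nat.totient_mul hcop, hsplit]

private lemma totient_sq_eq (n : ℕ) (hn : n ≠ 0) :
    Nat.totient (n ^ 2) = n * Nat.totient n := by
  have h1 : ((Nat.totient (n ^ 2) : ℚ)) = (n ^ 2 : ℕ) *
      ∏ p ∈ (n ^ 2).primeFactors, (1 - (p : ℚ)⁻¹) :=
    Nat.totient_eq_mul_prod_factors (n ^ 2)
  have h2 : ((Nat.totient n : ℚ)) = (n : ℕ) *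
      ∏ p ∈ n.primeFactors, (1 - (p : ℚ)⁻¹) := Nat.totient_eq_mul_prod_factors n
  have h3 : (n ^ 2).primeFactors = n.primeFactors := Nat.primeFactors_pow n (by norm_num)
  have : ((Nat.totient (n ^ 2) : ℚ)) = (n : ℚ) * Nat.totient n := by
    rw [h1, h3, h2]; push_cast; ring
  exact_mod_cast this

/-- The series `∑_a μ(a)/φ(a²)` converges absolutely, and its sum equals the Euler
product `∏_p (1 - 1/(p(p-1)))`, the density of primes `p` with `p - 1` squarefree. -/
theorem stmt16 :
    Summable (fun a : ℕ => |(moebius a : ℝ) / (Nat.totient (a ^ 2) : ℝ)|) ∧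
    Tendsto (fun n : ℕ => ∏ p ∈ (Finset.range n).filter Nat.Prime,
        (1 - 1 / ((p : ℝ) * ((p : ℝ) - 1))))
      atTop (nhds (∑' a : ℕ, (moebius a : ℝ) / (Nat.totient (a ^ 2) : ℝ))) := by
  set f : ℕ → ℝ := fun a => (moebius a : ℝ) / (Nat.totient (a ^ 2) : ℝ) with hfdef
  have hsum : Summable fun n : ℕ => |f n| := by
    have hbound : ∀ n : ℕ, |f n| ≤ Real.sqrt 2 * (1 / (n : ℝ) ^ (3/2 : ℝ)) := by
      intro n
      rcases eq_or_ne n 0 with rfl | hn0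
      · simp [hfdef]
      have hnpos : (0 : ℝ) < n := by exact_mod_cast Nat.pos_of_ne_zero hn0
      have hφpos : (0 : ℝ) < Nat.totient (n ^ 2) := by
        exact_mod_cast Nat.totient_pos.mpr (pow_pos (Nat.pos_of_ne_zero hn0) 2)
      have hμ : |(moebius n : ℝ)| ≤ 1 := by
        have h := abs_moebius_le_one (n := n)
        have : |((moebius n : ℤ) : ℝ)| ≤ ((1 : ℤ) : ℝ) := by
          rw [← Int.cast_abs]; exact_mod_cast h
        simpa using this
      have h1 : |f n| ≤ 1 / (Nat.totient (n ^ 2) : ℝ) := by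
        rw [hfdef, abs_div, abs_of_pos hφpos]
        gcongr
      -- key: n^3 ≤ 2 * φ(n²)²
      have hkey : (n : ℝ) ^ (3 : ℕ) ≤ 2 * (Nat.totient (n ^ 2) : ℝ) ^ 2 := by
        have h0 : Nat.totient (n ^ 2) = n * Nat.totient n := totient_sq_eq n hn0
        have h2 : (n : ℝ) ≤ 2 * (Nat.totient n : ℝ) ^ 2 := by
          exact_mod_cast le_two_mul_sq_totient n
        rw [h0]
        push_cast
        nlinarith [sq_nonneg (n : ℝ), hnpos.le]
      have h3 : (n : ℝ) ^ (3/2 : ℝ) ≤ Real.sqrt 2 * (Nat.totient (n ^ 2) : ℝ) := by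
        have := Real.sqrt_le_sqrt hkey
        rw [Real.sqrt_mul (by norm_num), Real.sqrt_sq hφpos.le] at this
        calc (n : ℝ) ^ (3/2 : ℝ) = Real.sqrt ((n : ℝ) ^ (3 : ℕ)) := by
              rw [Real.sqrt_eq_rpow, ← Real.rpow_natCast (n : ℝ) 3,
                ← Real.rpow_mul hnpos.le]
              norm_num
          _ ≤ _ := this
      calc |f n| ≤ 1 / (Nat.totient (n ^ 2) : ℝ) := h1
        _ ≤ Real.sqrt 2 * (1 / (n : ℝ) ^ (3/2 : ℝ)) := by
            rw [mul_one_div]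
            rw [div_le_div_iff₀ hφpos (by positivity)]
            linarith [h3]
    apply Summable.of_nonneg_of_le (fun n => abs_nonneg _) hbound
    exact (Real.summable_one_div_nat_rpow.mpr (by norm_num)).mul_left _
  have hf₁ : f 1 = 1 := by simp [hfdef]
  have hf₀ : f 0 = 0 := by simp [hfdef]
  have hmul : ∀ {m n : ℕ}, Nat.Coprime m n → f (m * n) = f m * f n := by
    intro m n h
    have h2 : Nat.Coprime (m ^ 2) (n ^ 2) := h.pow 2 2
    simp only [hfdef, mul_pow, Nat.totient_mul h2,
      isMultiplicative_moebius.map_mul_of_coprime h]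
    push_cast
    rw [mul_div_mul_comm]
  have hnorm : Summable fun n : ℕ => ‖f n‖ := by simpa [Real.norm_eq_abs] using hsum
  refine ⟨hsum, ?_⟩
  have hE := EulerProduct.eulerProduct hf₁ hmul hnorm hf₀
  refine hE.congr fun n => ?_
  rw [Nat.primesBelow]
  refine Finset.prod_congr rfl fun p hp => ?_
  have hpp : p.Prime := (Finset.mem_filter.mp hp).2
  have hvanish : ∀ e ∉ ({0, 1} : Finset ℕ), f (p ^ e) = 0 := by
    intro e he
    simp only [Finset.mem_insert, Finset.mem_singleton] at he
    push_neg at he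
    have hμ0 : moebius (p ^ e) = 0 := by
      rw [moebius_apply_prime_pow hpp he.1]; exact if_neg he.2
    simp [hfdef, hμ0]
  rw [tsum_eq_sum hvanish]
  have hφ : (Nat.totient (p ^ 2) : ℝ) = (p : ℝ) * ((p : ℝ) - 1) := by
    rw [show Nat.totient (p ^ 2) = p ^ 1 * (p - 1) from
      Nat.totient_prime_pow hpp (by norm_num)]
    push_cast [Nat.cast_sub hpp.one_lt.le]
    ring
  rw [Finset.sum_pair (by norm_num : (0 : ℕ) ≠ 1), pow_zero, pow_one, hf₁]
  have hμp : moebius p = -1 := moebius_apply_prime hpp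
  simp only [hfdef, hμp, hφ, Int.cast_neg, Int.cast_one]
  ring
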